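/- Output probabilities of Cayley-perturbed shallow circuits are low-degree rational functions (Lemma 7 of the paper): with the setup of the Cayley-perturbed circuit V(θ) = E_m(θ)⋯E_1(θ) built from m two-mode gates with Cayley data (L_i, φ_{i,1}, φ_{i,2}, G_i) and denominators q_i(θ), let σ be any permutation of Fin M with permutation matrix P_σ, and let r, t : Fin N → Fin M be injections (a collision-free outcome and a collision-free input). Then there exists a real polynomial P of degree at most 4mN such that, for every real θ with q_i(θ) ≠ 0 for all i, |Per( (V(θ)·P_σ).submatrix r t )|² · ( ∏_{i=1}^{m} |q_i(θ)|² )^N = P(θ). Equivalently, the output probability p_s(V(θ)P_σ) = |Per((V(θ)P_σ)_{s,t})|² is a degree-(4mN, 4mN) rational function of θ with denominator Q(θ) = (∏_i |q_i(θ)|²)^N. -/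

import Mathlib

/-!
Scaling the `i`-th gate by its Cayley denominator `q_i(θ)` clears it: `q_i(θ) E_i(θ)` is the
two-mode block with the numerator `L_i diag(p_{i,1}, p_{i,2}) L_iᴴ G_i` on the modes `a_i, b_i`
and `q_i(θ)` on the spectator modes, so its entries are polynomials of degree at most `2` in `θ`.
Hence `(∏ q_i(θ)) V(θ) P_σ` is the evaluation of a polynomial matrix with entries of degree at
most `2m`, and by homogeneity of the permanent `(∏ q_i(θ))^N Per((V(θ) P_σ)_{r,t})` is a complex
polynomial `f(θ)` of degree at most `2mN`. Finally `|f(θ)|² = (f · f̄)(θ)` for real `θ`, and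
`f · f̄` has real coefficients.
-/

open Matrix

/-- The Cayley denominator `q(θ) = ∏_{j ∈ Fin 2} (1 + iθ e^{iφ_j/2} sin(φ_j/2))`
of a two-mode gate with eigenphases `φ : Fin 2 → ℝ`. -/
noncomputable def cayleyQ (φ : Fin 2 → ℝ) (θ : ℝ) : ℂ :=
  ∏ j : Fin 2, (1 + Complex.I * (θ : ℂ) * Complex.exp (Complex.I * ((φ j / 2 : ℝ) : ℂ)) *
    (Real.sin (φ j / 2) : ℂ))

/-- The Cayley numerator eigenvalue
`p_j(θ) = e^{iφ_j} (1 - iθ e^{-iφ_j/2} sin(φ_j/2)) (1 + iθ e^{iφ_{3-j}/2} sin(φ_{3-j}/2))`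
of a two-mode gate; here `j + 1 : Fin 2` is the index other than `j`. -/
noncomputable def cayleyP (φ : Fin 2 → ℝ) (j : Fin 2) (θ : ℝ) : ℂ :=
  Complex.exp (Complex.I * ((φ j : ℝ) : ℂ)) *
    (1 - Complex.I * (θ : ℂ) * Complex.exp (-Complex.I * ((φ j / 2 : ℝ) : ℂ)) *
      (Real.sin (φ j / 2) : ℂ)) *
    (1 + Complex.I * (θ : ℂ) * Complex.exp (Complex.I * ((φ (j + 1) / 2 : ℝ) : ℂ)) *
      (Real.sin (φ (j + 1) / 2) : ℂ))

/-- The Cayley transform of the `2×2` unitary `L · diag(e^{iφ_1}, e^{iφ_2}) · Lᴴ`,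
in diagonal form: `H(θ) = q(θ)⁻¹ • (L · diag(p_1(θ), p_2(θ)) · Lᴴ)`. -/
noncomputable def cayleyGate (L : Matrix (Fin 2) (Fin 2) ℂ) (φ : Fin 2 → ℝ) (θ : ℝ) :
    Matrix (Fin 2) (Fin 2) ℂ :=
  (cayleyQ φ θ)⁻¹ • (L * Matrix.diagonal (fun j => cayleyP φ j θ) * Lᴴ)

/-- The `M × M` matrix of a two-mode gate: it acts as the `2×2` matrix `A` on the two
modes `a ≠ b` and as the identity on all other modes. -/
def twoModeGate (M : ℕ) (a b : Fin M) (A : Matrix (Fin 2) (Fin 2) ℂ) :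
    Matrix (Fin M) (Fin M) ℂ := fun x y =>
  if x = a then (if y = a then A 0 0 else if y = b then A 0 1 else 0)
  else if x = b then (if y = a then A 1 0 else if y = b then A 1 1 else 0)
  else (if y = x then 1 else 0)

open Polynomial

namespace Matrix

section Semiring

variable {k l n R : Type*} [Semiring R]

theorem natDegree_mul_apply_le [Fintype l] {A : Matrix k l R[X]} {B : Matrix l n R[X]}
    {d e : ℕ} (hA : ∀ i j, (A i j).natDegree ≤ d) (hB : ∀ i j, (B i j).natDegree ≤ e)
    (i : k) (j : n) : ((A * B) i j).natDegree ≤ d + e :=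
  natDegree_sum_le_of_forall_le _ _ fun x _ =>
    natDegree_mul_le.trans (add_le_add (hA i x) (hB x j))

theorem natDegree_list_prod_apply_le [Fintype n] [DecidableEq n] {l : List (Matrix n n R[X])}
    {d : ℕ} (h : ∀ A ∈ l, ∀ i j, (A i j).natDegree ≤ d) (i j : n) :
    (l.prod i j).natDegree ≤ d * l.length := by
  induction l generalizing i j with
  | nil =>
    rw [List.prod_nil, one_apply]
    split_ifs <;> simp
  | cons A l ih =>
    rw [List.prod_cons, List.length_cons, Nat.mul_succ, Nat.add_comm]
    exact natDegree_mul_apply_le (h A List.mem_cons_self)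
      (ih fun B hB => h B (List.mem_cons_of_mem A hB)) i j

theorem map_list_prod_eq_smul {ι S : Type*} [Fintype n] [DecidableEq n] [CommSemiring S]
    (f : R →+* S) (l : List ι) (W : ι → Matrix n n R) (c : ι → S)
    (E : ι → Matrix n n S) (h : ∀ i ∈ l, (W i).map f = c i • E i) :
    ((l.map W).prod).map f = (l.map c).prod • (l.map E).prod := by
  induction l with
  | nil => simp
  | cons i l ih =>
    simp only [List.map_cons, List.prod_cons, Matrix.map_mul, h i List.mem_cons_self,
      ih fun j hj => h j (List.mem_cons_of_mem i hj), smul_mul_smul_comm]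

end Semiring

variable {m n R S : Type*} [CommSemiring R] [CommSemiring S]

theorem natDegree_permanent_le [Fintype n] [DecidableEq n] {A : Matrix n n R[X]} {d : ℕ}
    (h : ∀ i j, (A i j).natDegree ≤ d) : A.permanent.natDegree ≤ Fintype.card n * d :=
  natDegree_sum_le_of_forall_le _ _ fun _ _ => (natDegree_prod_le _ _).trans <|
    (Finset.sum_le_card_nsmul _ _ d fun _ _ => h _ _).trans_eq (smul_eq_mul _ _)

theorem map_permanent [Fintype n] [DecidableEq n] (f : R →+* S) (A : Matrix n n R) :
    f A.permanent = (A.map f).permanent := by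
  simp [permanent, map_sum, map_prod]

theorem map_C_map_eval (A : Matrix m n R) (x : R) : (A.map C).map (eval x) = A := by
  ext; simp

end Matrix

theorem Polynomial.exists_eval_eq_norm_sq (p : ℂ[X]) :
    ∃ P : ℝ[X], P.natDegree ≤ 2 * p.natDegree ∧ ∀ θ : ℝ, P.eval θ = ‖p.eval (θ : ℂ)‖ ^ 2 := by
  set q := p * p.map (starRingEnd ℂ)
  have hq : q.map (starRingEnd ℂ) = q := by
    simp only [q, Polynomial.map_mul, map_map, RingHomCompTriple.comp_eq, Polynomial.map_id]
    ring
  have hlifts : q ∈ lifts Complex.ofRealHom := by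
    refine (lifts_iff_coeff_lifts q).2 fun k => ⟨(q.coeff k).re, ?_⟩
    exact Complex.conj_eq_iff_re.1 (by rw [← coeff_map, hq])
  obtain ⟨P, hPq, hPdeg⟩ := exists_natDegree_eq_of_mem_lifts hlifts
  refine ⟨P, ?_, fun θ => ?_⟩
  · rw [hPdeg, two_mul]
    exact natDegree_mul_le.trans (add_le_add le_rfl natDegree_map_le)
  · apply Complex.ofReal_injective
    have hconj : (p.map (starRingEnd ℂ)).eval (θ : ℂ) = starRingEnd ℂ (p.eval (θ : ℂ)) := by
      rw [eval_map, ← eval₂_at_apply, Complex.conj_ofReal]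
    rw [← Complex.ofRealHom_eq_coe, ← eval₂_at_apply, ← eval_map, hPq, Complex.ofRealHom_eq_coe,
      eval_mul, hconj, Complex.mul_conj, Complex.normSq_eq_norm_sq]

def twoModeBlock {R : Type*} [Zero R] (M : ℕ) (a b : Fin M) (A : Matrix (Fin 2) (Fin 2) R)
    (c : R) : Matrix (Fin M) (Fin M) R := fun x y =>
  if x = a then (if y = a then A 0 0 else if y = b then A 0 1 else 0)
  else if x = b then (if y = a then A 1 0 else if y = b then A 1 1 else 0)
  else (if y = x then c else 0)

theorem smul_twoModeGate (M : ℕ) (a b : Fin M) (A : Matrix (Fin 2) (Fin 2) ℂ) (c : ℂ) :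
    c • twoModeGate M a b A = twoModeBlock M a b (c • A) c := by
  ext x y
  simp only [twoModeGate, twoModeBlock, Matrix.smul_apply, smul_eq_mul]
  split_ifs <;> simp

theorem twoModeBlock_map {R S : Type*} [Zero R] [Zero S] (M : ℕ) (a b : Fin M)
    (A : Matrix (Fin 2) (Fin 2) R) (c : R) (f : R → S) (hf : f 0 = 0) :
    (twoModeBlock M a b A c).map f = twoModeBlock M a b (A.map f) (f c) := by
  ext x y
  simp only [twoModeBlock, Matrix.map_apply]
  split_ifs <;> simp [hf]

theorem natDegree_twoModeBlock_apply_le {R : Type*} [Semiring R] (M : ℕ) (a b : Fin M)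
    {A : Matrix (Fin 2) (Fin 2) R[X]} {c : R[X]} {d : ℕ} (hA : ∀ i j, (A i j).natDegree ≤ d)
    (hc : c.natDegree ≤ d) (x y : Fin M) : (twoModeBlock M a b A c x y).natDegree ≤ d := by
  simp only [twoModeBlock]
  split_ifs <;> simp [hA, hc]

noncomputable def cayleyQPoly (φ : Fin 2 → ℝ) : ℂ[X] :=
  ∏ j : Fin 2, (1 + C Complex.I * X * C (Complex.exp (Complex.I * ((φ j / 2 : ℝ) : ℂ))) *
    C (Real.sin (φ j / 2) : ℂ))

noncomputable def cayleyPPoly (φ : Fin 2 → ℝ) (j : Fin 2) : ℂ[X] :=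
  C (Complex.exp (Complex.I * ((φ j : ℝ) : ℂ))) *
    (1 - C Complex.I * X * C (Complex.exp (-Complex.I * ((φ j / 2 : ℝ) : ℂ))) *
      C (Real.sin (φ j / 2) : ℂ)) *
    (1 + C Complex.I * X * C (Complex.exp (Complex.I * ((φ (j + 1) / 2 : ℝ) : ℂ))) *
      C (Real.sin (φ (j + 1) / 2) : ℂ))

theorem eval_cayleyQPoly (φ : Fin 2 → ℝ) (θ : ℝ) :
    (cayleyQPoly φ).eval (θ : ℂ) = cayleyQ φ θ := by
  simp [cayleyQPoly, cayleyQ]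

theorem eval_cayleyPPoly (φ : Fin 2 → ℝ) (j : Fin 2) (θ : ℝ) :
    (cayleyPPoly φ j).eval (θ : ℂ) = cayleyP φ j θ := by
  simp [cayleyPPoly, cayleyP]

theorem natDegree_cayleyQPoly_le (φ : Fin 2 → ℝ) : (cayleyQPoly φ).natDegree ≤ 2 := by
  rw [cayleyQPoly, Fin.prod_univ_two]
  compute_degree

theorem natDegree_cayleyPPoly_le (φ : Fin 2 → ℝ) (j : Fin 2) :
    (cayleyPPoly φ j).natDegree ≤ 2 := by
  rw [cayleyPPoly]
  compute_degree

noncomputable def cayleyNumeratorPoly (L G : Matrix (Fin 2) (Fin 2) ℂ) (φ : Fin 2 → ℝ) :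
    Matrix (Fin 2) (Fin 2) ℂ[X] :=
  L.map C * Matrix.diagonal (cayleyPPoly φ) * (Lᴴ * G).map C

theorem cayleyNumeratorPoly_map_eval (L G : Matrix (Fin 2) (Fin 2) ℂ) (φ : Fin 2 → ℝ) (θ : ℝ)
    (hq : cayleyQ φ θ ≠ 0) :
    (cayleyNumeratorPoly L G φ).map (eval (θ : ℂ)) = cayleyQ φ θ • (cayleyGate L φ θ * G) := by
  rw [cayleyNumeratorPoly, ← coe_evalRingHom, Matrix.map_mul, Matrix.map_mul, coe_evalRingHom,
    Matrix.map_C_map_eval, Matrix.map_C_map_eval, Matrix.diagonal_map eval_zero, cayleyGate,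
    Matrix.smul_mul, smul_smul, mul_inv_cancel₀ hq, one_smul]
  simp only [eval_cayleyPPoly, Matrix.mul_assoc]

theorem natDegree_cayleyNumeratorPoly_apply_le (L G : Matrix (Fin 2) (Fin 2) ℂ)
    (φ : Fin 2 → ℝ) (i j : Fin 2) : (cayleyNumeratorPoly L G φ i j).natDegree ≤ 2 := by
  have hC : ∀ (A : Matrix (Fin 2) (Fin 2) ℂ) i j, (A.map C i j).natDegree ≤ 0 := by simp
  have hD : ∀ i j, (Matrix.diagonal (cayleyPPoly φ) i j).natDegree ≤ 2 := fun i j => by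
    rw [Matrix.diagonal_apply]
    split_ifs
    · exact natDegree_cayleyPPoly_le φ i
    · simp
  exact Matrix.natDegree_mul_apply_le (Matrix.natDegree_mul_apply_le (hC L) hD) (hC _) i j

noncomputable def clearedCayleyGate (M : ℕ) (a b : Fin M) (L G : Matrix (Fin 2) (Fin 2) ℂ)
    (φ : Fin 2 → ℝ) : Matrix (Fin M) (Fin M) ℂ[X] :=
  twoModeBlock M a b (cayleyNumeratorPoly L G φ) (cayleyQPoly φ)

theorem clearedCayleyGate_map_eval (M : ℕ) (a b : Fin M) (L G : Matrix (Fin 2) (Fin 2) ℂ)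
    (φ : Fin 2 → ℝ) (θ : ℝ) (hq : cayleyQ φ θ ≠ 0) :
    (clearedCayleyGate M a b L G φ).map (eval (θ : ℂ)) =
      cayleyQ φ θ • twoModeGate M a b (cayleyGate L φ θ * G) := by
  rw [clearedCayleyGate, twoModeBlock_map _ _ _ _ _ _ eval_zero,
    cayleyNumeratorPoly_map_eval _ _ _ _ hq, eval_cayleyQPoly, smul_twoModeGate]

theorem natDegree_clearedCayleyGate_apply_le (M : ℕ) (a b : Fin M)
    (L G : Matrix (Fin 2) (Fin 2) ℂ) (φ : Fin 2 → ℝ) (x y : Fin M) :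
    (clearedCayleyGate M a b L G φ x y).natDegree ≤ 2 :=
  natDegree_twoModeBlock_apply_le M a b (natDegree_cayleyNumeratorPoly_apply_le L G φ)
    (natDegree_cayleyQPoly_le φ) x y

noncomputable def clearedCircuit (M m : ℕ) (a b : Fin m → Fin M)
    (G L : Fin m → Matrix (Fin 2) (Fin 2) ℂ) (φ : Fin m → Fin 2 → ℝ) (σ : Equiv.Perm (Fin M)) :
    Matrix (Fin M) (Fin M) ℂ[X] :=
  ((List.finRange m).reverse.map fun i =>
    clearedCayleyGate M (a i) (b i) (L i) (G i) (φ i)).prod * (σ.permMatrix ℂ).map C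

theorem natDegree_clearedCircuit_apply_le (M m : ℕ) (a b : Fin m → Fin M)
    (G L : Fin m → Matrix (Fin 2) (Fin 2) ℂ) (φ : Fin m → Fin 2 → ℝ) (σ : Equiv.Perm (Fin M))
    (x y : Fin M) : (clearedCircuit M m a b G L φ σ x y).natDegree ≤ 2 * m := by
  have hgates : ∀ A ∈ (List.finRange m).reverse.map fun i =>
      clearedCayleyGate M (a i) (b i) (L i) (G i) (φ i), ∀ x y, (A x y).natDegree ≤ 2 := by
    simp only [List.mem_map]
    rintro _ ⟨i, -, rfl⟩
    exact natDegree_clearedCayleyGate_apply_le _ _ _ _ _ _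
  refine Matrix.natDegree_mul_apply_le (e := 0)
    (fun x y => (Matrix.natDegree_list_prod_apply_le hgates x y).trans_eq ?_)
    (fun _ _ => (natDegree_C _).le) x y
  simp

theorem clearedCircuit_map_eval (M m : ℕ) (a b : Fin m → Fin M)
    (G L : Fin m → Matrix (Fin 2) (Fin 2) ℂ) (φ : Fin m → Fin 2 → ℝ) (σ : Equiv.Perm (Fin M))
    (θ : ℝ) (hq : ∀ i, cayleyQ (φ i) θ ≠ 0) :
    (clearedCircuit M m a b G L φ σ).map (eval (θ : ℂ)) = (∏ i, cayleyQ (φ i) θ) •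
      (((List.finRange m).reverse.map fun i =>
        twoModeGate M (a i) (b i) (cayleyGate (L i) (φ i) θ * G i)).prod * σ.permMatrix ℂ) := by
  rw [clearedCircuit, ← coe_evalRingHom, Matrix.map_mul,
    Matrix.map_list_prod_eq_smul _ _ _ _ _
      fun i _ => clearedCayleyGate_map_eval _ _ _ _ _ _ θ (hq i),
    Matrix.smul_mul, coe_evalRingHom, Matrix.map_C_map_eval, List.map_reverse, List.prod_reverse,
    ← Fin.prod_univ_def]

theorem output_probability_rational_function_general (M m N : ℕ)
    (a b : Fin m → Fin M)
    (G L : Fin m → Matrix (Fin 2) (Fin 2) ℂ)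
    (φ : Fin m → Fin 2 → ℝ)
    (σ : Equiv.Perm (Fin M)) (r t : Fin N → Fin M) :
    ∃ P : Polynomial ℝ, P.degree ≤ (4 * m * N : ℕ) ∧
      ∀ θ : ℝ, (∀ i, cayleyQ (φ i) θ ≠ 0) →
        ‖(Matrix.permanent
              (((((List.finRange m).reverse.map (fun i =>
                    twoModeGate M (a i) (b i) (cayleyGate (L i) (φ i) θ * G i))).prod) *
                  σ.permMatrix ℂ).submatrix r t))‖ ^ 2 *
          (∏ i, ‖cayleyQ (φ i) θ‖ ^ 2) ^ N = P.eval θ := by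
  set V := clearedCircuit M m a b G L φ σ
  obtain ⟨P, hPdeg, hP⟩ := exists_eval_eq_norm_sq (V.submatrix r t).permanent
  refine ⟨P, degree_le_of_natDegree_le (hPdeg.trans ?_), fun θ hθ => ?_⟩
  · calc 2 * (V.submatrix r t).permanent.natDegree ≤ 2 * (Fintype.card (Fin N) * (2 * m)) :=
          Nat.mul_le_mul_left 2 <| Matrix.natDegree_permanent_le fun x y =>
            natDegree_clearedCircuit_apply_le M m a b G L φ σ (r x) (t y)
      _ = 4 * m * N := by rw [Fintype.card_fin]; ring
  · have hper : (V.submatrix r t).permanent.eval (θ : ℂ) = (∏ i, cayleyQ (φ i) θ) ^ N *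
        ((((List.finRange m).reverse.map fun i =>
          twoModeGate M (a i) (b i) (cayleyGate (L i) (φ i) θ * G i)).prod *
            σ.permMatrix ℂ).submatrix r t).permanent := by
      rw [← coe_evalRingHom, Matrix.map_permanent, ← Matrix.submatrix_map, coe_evalRingHom,
        clearedCircuit_map_eval M m a b G L φ σ θ hθ]
      exact (Matrix.permanent_smul _ _).trans (by rw [Fintype.card_fin]; rfl)
    rw [hP, hper, norm_mul, norm_pow, norm_prod, Finset.prod_pow]
    ring

/-- **Output probabilities of Cayley-perturbed shallow circuits are low-degree rational
functions** (Lemma 7 of the paper).  For the Cayley-perturbed circuit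
`V(θ) = E_m(θ) ⋯ E_1(θ)` built from `m` two-mode gates, any permutation `σ` of the
modes, and collision-free outcome/input injections `r, t : Fin N → Fin M`, there is a
real polynomial `P` of degree at most `4mN` with
`|Per((V(θ)·P_σ).submatrix r t)|² · (∏_i |q_i(θ)|²)^N = P(θ)` whenever all `q_i(θ) ≠ 0`;
i.e. the output probability is a degree-`(4mN, 4mN)` rational function of `θ` with
denominator `Q(θ) = (∏_i |q_i(θ)|²)^N`. -/
theorem output_probability_rational_function (M m N : ℕ)
    (a b : Fin m → Fin M) (hab : ∀ i, a i ≠ b i)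
    (G L : Fin m → Matrix (Fin 2) (Fin 2) ℂ)
    (hG : ∀ i, G i ∈ Matrix.unitaryGroup (Fin 2) ℂ)
    (hL : ∀ i, L i ∈ Matrix.unitaryGroup (Fin 2) ℂ)
    (φ : Fin m → Fin 2 → ℝ)
    (σ : Equiv.Perm (Fin M)) (r t : Fin N → Fin M)
    (hr : Function.Injective r) (ht : Function.Injective t) :
    ∃ P : Polynomial ℝ, P.degree ≤ (4 * m * N : ℕ) ∧
      ∀ θ : ℝ, (∀ i, cayleyQ (φ i) θ ≠ 0) →
        ‖(Matrix.permanent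
              (((((List.finRange m).reverse.map (fun i =>
                    twoModeGate M (a i) (b i) (cayleyGate (L i) (φ i) θ * G i))).prod) *
                  σ.permMatrix ℂ).submatrix r t))‖ ^ 2 *
          (∏ i, ‖cayleyQ (φ i) θ‖ ^ 2) ^ N = P.eval θ :=
  output_probability_rational_function_general M m N a b G L φ σ r t
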